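/- Let φ : [0,T] → ℝ≥0 be C¹ with compact support in (0,T), and let g : [0,T] → ℝ≥0 be integrable and satisfy −∫₀^T g(t) φ'(t) dt ≤ C ∫₀^T g(t) φ(t) dt for all such φ, and suppose lim_{γ↓0} γ⁻¹ ∫₀^γ g(t) dt = g₀. Then for almost every τ ∈ (0,T) (Lebesgue points of g), g(τ) ≤ e^{Cτ} g₀. -/

import Mathlib

open MeasureTheory Set Filter Topology

/-!
Multiplying by the Grönwall weight `e^{-Ct}` turns the hypothesis into `(e^{-Ct} g)' ≤ 0` in the
sense of distributions: test it with `φ = e^{-Ct} ψ`. Testing this in turn with the primitives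
`∫_{t-s}^t u` of `u - u(· - s)`, for trapezoidal bumps `u` tending to `𝟙_(c, d)`, shows that
`∫_{c+s}^{d+s} e^{-Ct} g ≤ ∫_c^d e^{-Ct} g`. At a Lebesgue point `τ` of `g`, dividing
`∫_τ^{τ+γ} e^{-Ct} g ≤ ∫_0^γ g` by `γ` and letting `γ → 0` gives `e^{-Cτ} g(τ) ≤ g₀`.
-/

noncomputable def trapezoid (a b δ t : ℝ) : ℝ := max 0 (min 1 (min ((t - a) / δ) ((b - t) / δ)))

section Trapezoid

variable {a b δ : ℝ}

lemma trapezoid_nonneg (t : ℝ) : 0 ≤ trapezoid a b δ t := le_max_left _ _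

lemma trapezoid_le_one (t : ℝ) : trapezoid a b δ t ≤ 1 :=
  max_le zero_le_one (min_le_left _ _)

@[fun_prop]
lemma continuous_trapezoid : Continuous (trapezoid a b δ) := by
  unfold trapezoid; fun_prop

lemma trapezoid_sub (s t : ℝ) : trapezoid a b δ (t - s) = trapezoid (a + s) (b + s) δ t := by
  unfold trapezoid; ring_nf

lemma trapezoid_eq_zero (hδ : 0 < δ) {t : ℝ} (ht : t ∉ Ioo a b) : trapezoid a b δ t = 0 := by
  refine max_eq_left (min_le_of_right_le ?_)
  rcases not_and_or.1 ht with h | h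
  · exact min_le_of_left_le (div_nonpos_of_nonpos_of_nonneg (by linarith [not_lt.1 h]) hδ.le)
  · exact min_le_of_right_le (div_nonpos_of_nonpos_of_nonneg (by linarith [not_lt.1 h]) hδ.le)

lemma support_trapezoid_subset (hδ : 0 < δ) : Function.support (trapezoid a b δ) ⊆ Ioo a b :=
  fun _ ht => by_contra fun h => ht (trapezoid_eq_zero hδ h)

lemma trapezoid_eq_one (hδ : 0 < δ) {t : ℝ} (ha : a + δ ≤ t) (hb : t ≤ b - δ) :
    trapezoid a b δ t = 1 := by
  have hmin : min ((t - a) / δ) ((b - t) / δ) ≥ 1 :=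
    le_min ((le_div_iff₀ hδ).2 (by linarith)) ((le_div_iff₀ hδ).2 (by linarith))
  rw [trapezoid, min_eq_left hmin, max_eq_right zero_le_one]

end Trapezoid

/-- The left end moves with `δ` so that the approximants vanish near `a`, as test functions on an
interval ending at `a` must. -/
lemma tendsto_trapezoid (a b t : ℝ) :
    Tendsto (fun δ => trapezoid (a + δ) b δ t) (𝓝[>] 0) (𝓝 ((Ioo a b).indicator 1 t)) := by
  by_cases ht : t ∈ Ioo a b
  · rw [indicator_of_mem ht, Pi.one_apply]
    refine tendsto_const_nhds.congr' ?_
    have hpos : 0 < min ((t - a) / 2) (b - t) := lt_min (by linarith [ht.1]) (by linarith [ht.2])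
    filter_upwards [self_mem_nhdsWithin, (eventually_lt_nhds hpos).filter_mono nhdsWithin_le_nhds]
      with δ hδ hδt
    exact (trapezoid_eq_one hδ (by linarith [min_le_left ((t - a) / 2) (b - t)])
      (by linarith [min_le_right ((t - a) / 2) (b - t)])).symm
  · rw [indicator_of_notMem ht]
    refine tendsto_const_nhds.congr' ?_
    filter_upwards [self_mem_nhdsWithin] with δ hδ
    exact (trapezoid_eq_zero hδ fun h => ht ⟨by linarith [h.1, mem_Ioi.1 hδ], h.2⟩).symm

/-- `f' ≤ 0` on `(a, b)` in the sense of distributions, tested against `C¹` functions. -/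
def DistribAntitoneOn (f : ℝ → ℝ) (a b : ℝ) : Prop :=
  ∀ ψ : ℝ → ℝ, ContDiff ℝ 1 ψ → (∀ t, 0 ≤ ψ t) → tsupport ψ ⊆ Ioo a b →
    0 ≤ ∫ t in a..b, f t * deriv ψ t

lemma distribAntitoneOn_exp_mul {g : ℝ → ℝ} {a b C : ℝ} (hg : IntervalIntegrable g volume a b)
    (hvar : ∀ φ : ℝ → ℝ, ContDiff ℝ 1 φ → (∀ t, 0 ≤ φ t) → tsupport φ ⊆ Ioo a b →
      -(∫ t in a..b, g t * deriv φ t) ≤ C * ∫ t in a..b, g t * φ t) :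
    DistribAntitoneOn (fun t => Real.exp (-C * t) * g t) a b := by
  intro ψ hψ hψ0 hψs
  show 0 ≤ ∫ t in a..b, Real.exp (-C * t) * g t * deriv ψ t
  set φ : ℝ → ℝ := fun t => Real.exp (-C * t) * ψ t
  have hφ : ContDiff ℝ 1 φ := (contDiff_const.mul contDiff_id).exp.mul hψ
  have hderiv (t : ℝ) : deriv φ t = -C * φ t + Real.exp (-C * t) * deriv ψ t := by
    have : HasDerivAt φ _ t := ((hasDerivAt_id' t).const_mul (-C)).exp.mul
      (hψ.differentiable one_ne_zero t).hasDerivAt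
    rw [this.deriv]; ring
  have hsplit : ∫ t in a..b, g t * deriv φ t =
      -C * (∫ t in a..b, g t * φ t) + ∫ t in a..b, Real.exp (-C * t) * g t * deriv ψ t := by
    rw [intervalIntegral.integral_congr (g := fun t =>
        -C * (g t * φ t) + Real.exp (-C * t) * g t * deriv ψ t) fun t _ => by rw [hderiv]; ring,
      intervalIntegral.integral_add ((hg.mul_continuousOn hφ.continuous.continuousOn).const_mul _)
        ((hg.continuousOn_mul (by fun_prop)).mul_continuousOn
          (hψ.continuous_deriv le_rfl).continuousOn),
      intervalIntegral.integral_const_mul]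
  have := hvar φ hφ (fun t => mul_nonneg (Real.exp_nonneg _) (hψ0 t))
    (tsupport_mul_subset_right.trans hψs)
  rw [hsplit] at this
  linarith

lemma tendsto_integral_mul_trapezoid {f : ℝ → ℝ} {a b c d : ℝ}
    (hfi : IntervalIntegrable f volume a b) (hac : a ≤ c) (hcd : c ≤ d) (hdb : d ≤ b) :
    Tendsto (fun δ => ∫ t in a..b, f t * trapezoid (c + δ) d δ t) (𝓝[>] 0)
      (𝓝 (∫ t in c..d, f t)) := by
  have hlim : ∫ t in a..b, f t * (Ioo c d).indicator 1 t = ∫ t in c..d, f t := by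
    rw [intervalIntegral.integral_congr (g := (Ioo c d).indicator f) fun t _ => by
        by_cases ht : t ∈ Ioo c d <;> simp [ht],
      intervalIntegral.integral_of_le (hac.trans (hcd.trans hdb)),
      setIntegral_indicator measurableSet_Ioo,
      inter_eq_right.2 (Ioo_subset_Ioc_self.trans (Ioc_subset_Ioc hac hdb)),
      ← integral_Ioc_eq_integral_Ioo, intervalIntegral.integral_of_le hcd]
  rw [← hlim]
  refine intervalIntegral.tendsto_integral_filter_of_dominated_convergence (fun t => ‖f t‖)
    (Eventually.of_forall fun δ => ?_) (Eventually.of_forall fun δ => ?_) hfi.norm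
    (Eventually.of_forall fun t _ => tendsto_const_nhds.mul (tendsto_trapezoid c d t))
  · exact (intervalIntegrable_iff.1 (hfi.mul_continuousOn
      continuous_trapezoid.continuousOn)).aestronglyMeasurable
  · refine Eventually.of_forall fun t _ => ?_
    rw [norm_mul, Real.norm_of_nonneg (trapezoid_nonneg t)]
    exact mul_le_of_le_one_right (norm_nonneg _) (trapezoid_le_one t)

namespace DistribAntitoneOn

variable {f : ℝ → ℝ} {a b : ℝ}

lemma integral_mul_comp_sub_le (hf : DistribAntitoneOn f a b)
    (hfi : IntervalIntegrable f volume a b) {u : ℝ → ℝ} (hu : Continuous u) (hu0 : ∀ t, 0 ≤ u t)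
    {c d s : ℝ} (hsupp : Function.support u ⊆ Ioo c d) (hac : a < c) (hs : 0 ≤ s)
    (hdb : d + s < b) :
    ∫ t in a..b, f t * u (t - s) ≤ ∫ t in a..b, f t * u t := by
  set ψ : ℝ → ℝ := fun t => ∫ x in (t - s)..t, u x
  have hF (x : ℝ) : HasDerivAt (fun t => ∫ y in (0 : ℝ)..t, u y) (u x) x :=
    (hu.integral_hasStrictDerivAt 0 x).hasDerivAt
  have hψ' (t : ℝ) : HasDerivAt ψ (u t - u (t - s)) t := by
    have hψ_eq : ψ = fun t => (∫ y in (0 : ℝ)..t, u y) - ∫ y in (0 : ℝ)..(t - s), u y :=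
      funext fun t => (intervalIntegral.integral_interval_sub_left (hu.intervalIntegrable _ _)
        (hu.intervalIntegrable _ _)).symm
    rw [hψ_eq]
    exact (hF t).sub ((hF (t - s)).comp_sub_const t s)
  have hψC1 : ContDiff ℝ 1 ψ := by
    rw [contDiff_one_iff_deriv]
    refine ⟨fun t => (hψ' t).differentiableAt, ?_⟩
    rw [show deriv ψ = fun t => u t - u (t - s) from funext fun t => (hψ' t).deriv]
    fun_prop
  have hψ0 (t : ℝ) : 0 ≤ ψ t :=
    intervalIntegral.integral_nonneg (by linarith) fun x _ => hu0 x
  have hψsupp : Function.support ψ ⊆ Ioo c (d + s) := by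
    intro t ht
    by_contra hmem
    have hzero : EqOn u 0 (uIcc (t - s) t) := by
      intro x hx
      rw [uIcc_of_le (by linarith)] at hx
      refine Function.notMem_support.1 fun hux => hmem ?_
      have := hsupp hux
      exact ⟨by linarith [this.1, hx.2], by linarith [this.2, hx.1]⟩
    exact ht (by simp only [ψ, intervalIntegral.integral_congr hzero, Pi.zero_apply,
      intervalIntegral.integral_zero])
  have key := hf ψ hψC1 hψ0 <|
    (closure_minimal (hψsupp.trans Ioo_subset_Icc_self) isClosed_Icc).trans (Icc_subset_Ioo hac hdb)
  rw [intervalIntegral.integral_congr (g := fun t => f t * u t - f t * u (t - s))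
      fun t _ => by rw [(hψ' t).deriv]; ring,
    intervalIntegral.integral_sub (hfi.mul_continuousOn hu.continuousOn)
      (hfi.mul_continuousOn (by fun_prop))] at key
  linarith

lemma integral_add_le (hf : DistribAntitoneOn f a b) (hfi : IntervalIntegrable f volume a b)
    {c d s : ℝ} (hac : a ≤ c) (hcd : c ≤ d) (hs : 0 ≤ s) (hdb : d + s < b) :
    ∫ t in (c + s)..(d + s), f t ≤ ∫ t in c..d, f t := by
  refine le_of_tendsto_of_tendsto
    (tendsto_integral_mul_trapezoid hfi (by linarith) (by linarith) hdb.le)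
    (tendsto_integral_mul_trapezoid hfi hac hcd (by linarith)) ?_
  filter_upwards [self_mem_nhdsWithin] with δ (hδ : 0 < δ)
  have := hf.integral_mul_comp_sub_le hfi continuous_trapezoid trapezoid_nonneg
    (support_trapezoid_subset (a := c + δ) (b := d) hδ) (by linarith) hs hdb
  simpa only [trapezoid_sub, add_right_comm c δ s] using this

lemma le_of_hasDerivAt (hf : DistribAntitoneOn f a b) (hfi : IntervalIntegrable f volume a b)
    {τ : ℝ} (hτ : τ ∈ Ioo a b) (hderiv : HasDerivAt (fun x => ∫ t in τ..x, f t) (f τ) τ)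
    {g : ℝ → ℝ} {L : ℝ} (hgi : IntervalIntegrable g volume a b) (hfg : ∀ t ∈ Icc a b, f t ≤ g t)
    (hL : Tendsto (fun γ => γ⁻¹ * ∫ t in a..(a + γ), g t) (𝓝[>] 0) (𝓝 L)) :
    f τ ≤ L := by
  refine le_of_tendsto_of_tendsto hderiv.tendsto_slope_zero_right hL ?_
  filter_upwards [self_mem_nhdsWithin,
    (eventually_lt_nhds (sub_pos.2 hτ.2)).filter_mono nhdsWithin_le_nhds] with γ (hγ : 0 < γ) hγb
  simp only [intervalIntegral.integral_same, sub_zero, smul_eq_mul]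
  gcongr
  have hsub : uIcc a (a + γ) ⊆ uIcc a b :=
    uIcc_subset_uIcc_left (mem_uIcc_of_le (by linarith) (by linarith [hτ.1]))
  calc ∫ t in τ..(τ + γ), f t = ∫ t in (a + (τ - a))..(a + γ + (τ - a)), f t := by ring_nf
    _ ≤ ∫ t in a..(a + γ), f t :=
      hf.integral_add_le hfi le_rfl (by linarith) (by linarith [hτ.1]) (by linarith)
    _ ≤ ∫ t in a..(a + γ), g t :=
      intervalIntegral.integral_mono_on (by linarith) (hfi.mono_set hsub) (hgi.mono_set hsub)
        fun t ht => hfg t ⟨ht.1, by linarith [ht.2, hτ.1]⟩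

end DistribAntitoneOn

theorem stmt_12_general (T C g₀ : ℝ) (hT : 0 < T) (hC : 0 ≤ C)
    (g : ℝ → ℝ) (hg_nonneg : ∀ t, 0 ≤ g t)
    (hg_int : IntegrableOn g (Set.Ioo 0 T))
    (hvar : ∀ φ : ℝ → ℝ, ContDiff ℝ 1 φ → (∀ t, 0 ≤ φ t) →
      tsupport φ ⊆ Set.Ioo 0 T →
      -(∫ t in (0:ℝ)..T, g t * deriv φ t) ≤ C * ∫ t in (0:ℝ)..T, g t * φ t)
    (hlim : Tendsto (fun γ : ℝ => γ⁻¹ * ∫ t in (0:ℝ)..γ, g t)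
      (nhdsWithin 0 (Set.Ioi 0)) (nhds g₀)) :
    ∀ᵐ τ ∂(volume.restrict (Set.Ioo 0 T)), g τ ≤ Real.exp (C * τ) * g₀ := by
  have hgi : IntervalIntegrable g volume 0 T :=
    (intervalIntegrable_iff_integrableOn_Ioo_of_le hT.le).2 hg_int
  set h : ℝ → ℝ := fun t => Real.exp (-C * t) * g t
  have hh : DistribAntitoneOn h 0 T := distribAntitoneOn_exp_mul hgi hvar
  have hhi : IntervalIntegrable h volume 0 T := hgi.continuousOn_mul (by fun_prop)
  have hhg : ∀ t, 0 ≤ t → h t ≤ g t := fun t ht =>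
    mul_le_of_le_one_left (hg_nonneg t) (Real.exp_le_one_iff.2 (by nlinarith))
  rw [ae_restrict_iff' measurableSet_Ioo]
  filter_upwards [hhi.ae_hasDerivAt_integral] with τ hτ ⟨hτ0, hτT⟩
  have hτI : τ ∈ uIcc 0 T := mem_uIcc_of_le hτ0.le hτT.le
  have hhτ : h τ ≤ g₀ :=
    hh.le_of_hasDerivAt hhi ⟨hτ0, hτT⟩ (hτ hτI τ hτI) hgi (fun t ht => hhg t ht.1)
      (by simpa only [zero_add] using hlim)
  calc g τ = Real.exp (C * τ) * h τ := by simp [h, ← mul_assoc, ← Real.exp_add]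
    _ ≤ Real.exp (C * τ) * g₀ := by gcongr

/-- Grönwall-type conclusion from the distributional inequality
`−∫ g φ' ≤ C ∫ g φ` for all nonnegative test functions `φ` compactly
supported in `(0,T)`, together with the initial-trace condition
`γ⁻¹ ∫₀^γ g → g₀`: almost every `τ ∈ (0,T)` satisfies `g(τ) ≤ e^{Cτ} g₀`. -/
theorem stmt_12 (T C g₀ : ℝ) (hT : 0 < T) (hC : 0 ≤ C) (hg₀ : 0 ≤ g₀)
    (g : ℝ → ℝ) (hg_nonneg : ∀ t, 0 ≤ g t)
    (hg_int : IntegrableOn g (Set.Ioo 0 T))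
    (hvar : ∀ φ : ℝ → ℝ, ContDiff ℝ 1 φ → (∀ t, 0 ≤ φ t) →
      tsupport φ ⊆ Set.Ioo 0 T →
      -(∫ t in (0:ℝ)..T, g t * deriv φ t) ≤ C * ∫ t in (0:ℝ)..T, g t * φ t)
    (hlim : Tendsto (fun γ : ℝ => γ⁻¹ * ∫ t in (0:ℝ)..γ, g t)
      (nhdsWithin 0 (Set.Ioi 0)) (nhds g₀)) :
    ∀ᵐ τ ∂(volume.restrict (Set.Ioo 0 T)), g τ ≤ Real.exp (C * τ) * g₀ :=
  stmt_12_general T C g₀ hT hC g hg_nonneg hg_int hvar hlim
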